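/- arXiv:math/0011103 — 2 statements merged into one kernel-verified Lean document; each statement's English description precedes it below -/
import Mathlib

section
/- The orbifold Euler number χ(M, G) = (1/|G|) Σ_{g_1 g_2 = g_2 g_1} χ(M^{g_1,g_2}) equals Σ_{[g]} χ(M^g / Z(g)), the sum over conjugacy classes of G of the Euler numbers of the quotients of fixed-point sets by centralizers. -/
/-!
Both sides are averages of the class function
`F(g) = Σ_{h ∈ Z(g)} χ(M^{g,h})`: conjugating by `k` maps `M^{g,h}` bijectively onto
`M^{kgk⁻¹,khk⁻¹}`. Grouping the sum `Σ_g F(g)` by conjugacy classes and using the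
orbit–stabilizer identity `|[g]| · |Z(g)| = |G|` turns `|G|⁻¹ Σ_g F(g)` into
`Σ_{[g]} |Z(g)|⁻¹ F(g)`.
-/

theorem ConjClasses.card_carrier_mul_card_centralizer {G : Type*} [Group G] (g : G) :
    Nat.card (ConjClasses.mk g).carrier * Nat.card (Subgroup.centralizer {g}) = Nat.card G := by
  rw [← ConjAct.orbit_eq_carrier_conjClasses, Subgroup.nat_card_centralizer_nat_card_stabilizer,
    Nat.card_coe_set_eq, ← MulAction.index_stabilizer, mul_comm, Subgroup.card_mul_index]
  exact Nat.card_congr ConjAct.ofConjAct.toEquiv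

theorem ConjClasses.sum_comp_mk {G R : Type*} [Group G] [Fintype G] [Fintype (ConjClasses G)]
    [AddCommMonoid R] (φ : ConjClasses G → R) :
    ∑ g : G, φ (ConjClasses.mk g) = ∑ c : ConjClasses G, Nat.card c.carrier • φ c := by
  classical
  rw [← Fintype.sum_fiberwise' ConjClasses.mk φ]
  refine Fintype.sum_congr _ _ fun c => ?_
  rw [Finset.sum_const, Finset.card_univ, ← Nat.card_eq_fintype_card,
    ConjClasses.carrier_eq_preimage_mk]
  rfl

theorem ConjClasses.inv_card_mul_card_carrier {G K : Type*} [Group G] [Finite G] [DivisionRing K]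
    [CharZero K] (g : G) :
    (Nat.card G : K)⁻¹ * Nat.card (ConjClasses.mk g).carrier =
      (Nat.card (Subgroup.centralizer {g}) : K)⁻¹ := by
  have : Nonempty (ConjClasses.mk g).carrier := ⟨⟨g, ConjClasses.mem_carrier_mk⟩⟩
  have hclass : (Nat.card (ConjClasses.mk g).carrier : K) ≠ 0 := by
    exact_mod_cast Nat.card_pos.ne'
  rw [← ConjClasses.card_carrier_mul_card_centralizer g, Nat.cast_mul, mul_inv_rev, mul_assoc,
    inv_mul_cancel₀ hclass, mul_one]

namespace MulAction

theorem card_commonFixed_conj {G M : Type*} [Group G] [MulAction G M] (k g h : G) :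
    Nat.card {m : M // (k * g * k⁻¹) • m = m ∧ (k * h * k⁻¹) • m = m} =
      Nat.card {m : M // g • m = m ∧ h • m = m} := by
  refine Nat.card_congr (Equiv.subtypeEquiv (MulAction.toPerm k⁻¹) fun m => ?_)
  simp only [toPerm_apply, mul_smul, smul_eq_iff_eq_inv_smul k, eq_comm]

variable (G M : Type*) [Group G] [Fintype G] [DecidableEq G] [MulAction G M]

noncomputable def commutingFixedCount (g : G) : ℚ :=
  ∑ h : G, if h * g = g * h then (Nat.card {m : M // g • m = m ∧ h • m = m} : ℚ) else 0

variable {G M}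

theorem commutingFixedCount_conj (k g : G) :
    commutingFixedCount G M (k * g * k⁻¹) = commutingFixedCount G M g := by
  refine (Fintype.sum_equiv (MulAut.conj k).toEquiv _ _ fun h => ?_).symm
  simp only [MulEquiv.toEquiv_eq_coe, MulEquiv.coe_toEquiv, MulAut.conj_apply,
    card_commonFixed_conj, conj_mul, mul_left_cancel_iff, mul_right_cancel_iff]

theorem commutingFixedCount_eq_of_isConj {g g' : G} (hconj : IsConj g g') :
    commutingFixedCount G M g = commutingFixedCount G M g' := by
  obtain ⟨k, rfl⟩ := isConj_iff.mp hconj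
  exact (commutingFixedCount_conj k g).symm

end MulAction

theorem orbifold_euler_number_eq_sum_over_classes_general
    (G : Type*) [Group G] [Fintype G] [DecidableEq G] [Fintype (ConjClasses G)]
    (M : Type*) [MulAction G M]
    (rep : ConjClasses G → G) (hrep : ∀ c, ConjClasses.mk (rep c) = c) :
    (Fintype.card G : ℚ)⁻¹ *
      ∑ p : G × G, (if p.1 * p.2 = p.2 * p.1 then
        (Nat.card {m : M // p.1 • m = m ∧ p.2 • m = m} : ℚ) else 0) =
    ∑ c : ConjClasses G,
      (Nat.card (Subgroup.centralizer {rep c} : Subgroup G) : ℚ)⁻¹ *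
        ∑ h : G, (if h * rep c = rep c * h then
          (Nat.card {m : M // (rep c) • m = m ∧ h • m = m} : ℚ) else 0) := by
  have hpairs : ∑ p : G × G, (if p.1 * p.2 = p.2 * p.1 then
      (Nat.card {m : M // p.1 • m = m ∧ p.2 • m = m} : ℚ) else 0) =
        ∑ g, MulAction.commutingFixedCount G M g := by
    simp only [Fintype.sum_prod_type, MulAction.commutingFixedCount, eq_comm]
  have hclass (g : G) : MulAction.commutingFixedCount G M g =
      MulAction.commutingFixedCount G M (rep (.mk g)) :=
    MulAction.commutingFixedCount_eq_of_isConj (ConjClasses.mk_eq_mk_iff_isConj.mp (hrep _).symm)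
  rw [hpairs, Fintype.sum_congr _ _ hclass,
    ConjClasses.sum_comp_mk fun c => MulAction.commutingFixedCount G M (rep c), Finset.mul_sum]
  refine Fintype.sum_congr _ _ fun c => ?_
  have hcard := ConjClasses.inv_card_mul_card_carrier (K := ℚ) (rep c)
  rw [hrep c] at hcard
  rw [nsmul_eq_mul, ← mul_assoc, Fintype.card_eq_nat_card, hcard,
    MulAction.commutingFixedCount]

/-- The orbifold Euler number
`χ(M,G) = (1/|G|) Σ_{g₁g₂ = g₂g₁} χ(M^{g₁,g₂})` equals `Σ_{[g]} χ(M^g/Z(g))`, the sum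
over conjugacy classes of `G` of the Euler numbers of the quotient of the fixed-point set
by the centralizer; here `M` is a finite `G`-space (Euler characteristic = cardinality),
and `χ(M^g/Z(g))` is computed by Burnside's formula
`(1/|Z(g)|) Σ_{h ∈ Z(g)} χ(M^{g,h})`. -/
theorem orbifold_euler_number_eq_sum_over_classes
    (G : Type*) [Group G] [Fintype G] [DecidableEq G] [Fintype (ConjClasses G)]
    (M : Type*) [Fintype M] [MulAction G M]
    (rep : ConjClasses G → G) (hrep : ∀ c, ConjClasses.mk (rep c) = c) :
    (Fintype.card G : ℚ)⁻¹ *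
      ∑ p : G × G, (if p.1 * p.2 = p.2 * p.1 then
        (Nat.card {m : M // p.1 • m = m ∧ p.2 • m = m} : ℚ) else 0) =
    ∑ c : ConjClasses G,
      (Nat.card (Subgroup.centralizer {rep c} : Subgroup G) : ℚ)⁻¹ *
        ∑ h : G, (if h * rep c = rep c * h then
          (Nat.card {m : M // (rep c) • m = m ∧ h • m = m} : ℚ) else 0) :=
  orbifold_euler_number_eq_sum_over_classes_general G M rep hrep
end

section
/- The ℂ-algebra of invariants ℂ[x_2,…,x_n,y_2,…,y_n]^{Γ_{n−1}} is generated by the polynomials Σ_{i=2}^n f(x_i, y_i) as f runs over a linear basis of the space of Γ-invariants ℂ[x,y]^Γ, where Γ ⊂ GL_2(ℂ) is a finite group acting diagonally and Γ_{n−1} = Γ^{n−1} ⋊ S_{n−1} acts on the n−1 pairs of variables. (For Γ trivial this is Weyl's theorem that symmetric polynomial invariants of S_{n-1} acting diagonally on (ℂ^2)^{n-1} are generated by polarized power sums.) -/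
/-!
Averaging over the finite group `Γ^m ⋊ S_m` (possible in characteristic zero) is the identity on
invariants, so it suffices that the average of every monomial `∏ᵢ hᵢ(xᵢ, yᵢ)` lies in the algebra
generated by the polarizations. Averaging over `Γ^m` replaces each `hᵢ` by the `Γ`-invariant
`fᵢ = ∑_γ γ • hᵢ`, and averaging over `S_m` then yields the augmented monomial
`∑_{j injective} ∏ᵢ fᵢ(x_{j i}, y_{j i})`. Augmented monomials in invariants are generated by
polarizations of invariants, by induction on the number of factors: multiplying the one in
`f₁, …, f_k` by the polarization of `f` gives the one in `f₁, …, f_k, f` plus the `k` augmented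
monomials in which `f` is merged into some `fₜ`, and `fₜ f` is again invariant.
-/

open MvPolynomial

variable {Γ : Type} [Group Γ]

/-- The substitution action of `γ ∈ Γ ⊂ GL_2(ℂ)` on `ℂ[x,y]` (variables indexed by
`Fin 2`): each variable is replaced by the corresponding linear form. -/
noncomputable def actOne (ι : Γ →* Matrix.GeneralLinearGroup (Fin 2) ℂ) (γ : Γ) :
    MvPolynomial (Fin 2) ℂ →ₐ[ℂ] MvPolynomial (Fin 2) ℂ :=
  aeval fun v => ∑ w : Fin 2, ((ι γ : Matrix (Fin 2) (Fin 2) ℂ) v w) • (X w)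

/-- The substitution action of the element `(g, s)` of the wreath product
`Γ_m = Γ^m ⋊ S_m` on `ℂ[x_1,…,x_m,y_1,…,y_m]` (variables indexed by `Fin m × Fin 2`):
`Γ^m` acts factorwise via the inclusion `Γ ⊂ GL_2(ℂ)` and `S_m` permutes the pairs of
variables. -/
noncomputable def actWreath {m : ℕ} (ι : Γ →* Matrix.GeneralLinearGroup (Fin 2) ℂ)
    (g : Fin m → Γ) (s : Equiv.Perm (Fin m)) :
    MvPolynomial (Fin m × Fin 2) ℂ →ₐ[ℂ] MvPolynomial (Fin m × Fin 2) ℂ :=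
  aeval fun p => ∑ w : Fin 2, ((ι (g p.1) : Matrix (Fin 2) (Fin 2) ℂ) p.2 w) • (X (s p.1, w))

/-- The polarization `f(x,y) ↦ Σ_{i=1}^m f(x_i, y_i)`. -/
noncomputable def polarize {m : ℕ} (f : MvPolynomial (Fin 2) ℂ) :
    MvPolynomial (Fin m × Fin 2) ℂ :=
  ∑ i : Fin m, aeval (fun v => X (i, v)) f

theorem Submodule.mem_of_forall_apply_eq_self {K V G : Type*} [DivisionRing K] [CharZero K]
    [AddCommMonoid V] [Module K V] [Fintype G] [Nonempty G] (M : Submodule K V)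
    (ρ : G → V →ₗ[K] V) (hM : ∀ v, ∑ g, ρ g v ∈ M) {v : V} (hv : ∀ g, ρ g v = v) : v ∈ M := by
  have hcard : (Fintype.card G : K) ≠ 0 := Nat.cast_ne_zero.mpr Fintype.card_ne_zero
  have hsum : ∑ g, ρ g v = (Fintype.card G : K) • v := by
    simp [hv, Finset.card_univ, Nat.cast_smul_eq_nsmul]
  simpa [hsum, hcard] using M.smul_mem (Fintype.card G : K)⁻¹ (hM v)

section AugmentedMonomial

variable {R A B ι : Type*} [CommRing R] [CommSemiring A] [CommRing B] [Algebra R A]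
  [Algebra R B] [Fintype ι] (φ : ι → A →ₐ[R] B)

noncomputable def augmentedMonomial {k : ℕ} (g : Fin k → A) : B :=
  ∑ j : Fin k ↪ ι, ∏ i, φ (j i) (g i)

omit [Fintype ι] in
theorem prod_apply_update_mul {k : ℕ} (j : Fin k → ι) (g : Fin k → A) (t : Fin k) (a : A) :
    ∏ i, φ (j i) (Function.update g t (g t * a) i) = φ (j t) a * ∏ i, φ (j i) (g i) := by
  have hrest : ∏ i ∈ {t}ᶜ, φ (j i) (Function.update g t (g t * a) i) =
      ∏ i ∈ {t}ᶜ, φ (j i) (g i) :=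
    Finset.prod_congr rfl fun i hi => by rw [Function.update_of_ne (by simpa using hi)]
  rw [Fintype.prod_eq_mul_prod_compl t, Fintype.prod_eq_mul_prod_compl t (fun i => φ (j i) (g i)),
    hrest, Function.update_self, map_mul]
  ring

theorem sum_mul_augmentedMonomial {k : ℕ} (a : A) (g : Fin k → A) :
    (∑ l, φ l a) * augmentedMonomial φ g =
      augmentedMonomial φ (Fin.cons a g : Fin (k + 1) → A) +
        ∑ t, augmentedMonomial φ (Function.update g t (g t * a)) := by
  classical
  have hsplit : ∀ j : Fin k ↪ ι, ∑ l, φ l a * ∏ i, φ (j i) (g i) =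
      ∑ l : {l // l ∉ Set.range j}, φ l a * ∏ i, φ (j i) (g i) +
        ∑ t, φ (j t) a * ∏ i, φ (j i) (g i) := by
    intro j
    rw [← Fintype.sum_subtype_add_sum_subtype (· ∈ Set.range j)
      (fun l => φ l a * ∏ i, φ (j i) (g i)), add_comm]
    congr 1
    convert (Fintype.sum_equiv (Equiv.ofInjective j j.injective)
      (fun t => φ (j t) a * ∏ i, φ (j i) (g i))
      (fun l : Set.range j => φ l a * ∏ i, φ (j i) (g i)) fun t => rfl).symm
  simp only [augmentedMonomial, Finset.mul_sum, Finset.sum_mul]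
  simp only [hsplit, Finset.sum_add_distrib, prod_apply_update_mul]
  congr 1
  · refine (Fintype.sum_sigma' (fun (j : Fin k ↪ ι) (l : {l // l ∉ Set.range j}) =>
      φ l a * ∏ i, φ (j i) (g i))).symm.trans ?_
    refine (Fintype.sum_equiv (Equiv.embeddingFinSucc k ι) _ _ fun e => ?_).symm
    rw [Fin.prod_univ_succ]
    simp
  · exact Finset.sum_comm

theorem augmentedMonomial_mem_adjoin {S : Set A} (hS : ∀ a ∈ S, ∀ b ∈ S, a * b ∈ S) {k : ℕ}
    (g : Fin k → A) (hg : ∀ i, g i ∈ S) :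
    augmentedMonomial φ g ∈ Algebra.adjoin R {P | ∃ f ∈ S, P = ∑ l, φ l f} := by
  induction k with
  | zero => simp [augmentedMonomial]
  | succ k ih =>
    have hrec := sum_mul_augmentedMonomial φ (g 0) (Fin.tail g)
    rw [Fin.cons_self_tail] at hrec
    rw [eq_sub_of_add_eq hrec.symm]
    refine sub_mem (mul_mem (Algebra.subset_adjoin ⟨g 0, hg 0, rfl⟩) (ih _ fun i => hg _))
      (sum_mem fun t _ => ih _ fun i => ?_)
    rcases eq_or_ne i t with rfl | hit
    · rw [Function.update_self]
      exact hS _ (hg _) _ (hg 0)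
    · rw [Function.update_of_ne hit]
      exact hg _

theorem sum_perm_prod_eq_augmentedMonomial {m : ℕ} (φ : Fin m → A →ₐ[R] B) (g : Fin m → A) :
    ∑ s : Equiv.Perm (Fin m), ∏ i, φ (s i) (g i) = augmentedMonomial φ g :=
  Fintype.sum_equiv (Equiv.embeddingEquivOfFinite (Fin m)).symm _ _ fun _ => rfl

end AugmentedMonomial

section WreathAction

variable {m : ℕ} (ι : Γ →* Matrix.GeneralLinearGroup (Fin 2) ℂ)

theorem polarize_eq_sum_rename (f : MvPolynomial (Fin 2) ℂ) :
    (polarize f : MvPolynomial (Fin m × Fin 2) ℂ) = ∑ i, rename (Prod.mk i) f := by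
  simp only [polarize, rename_eq_aeval]
  rfl

theorem actOne_actOne (γ δ : Γ) (f : MvPolynomial (Fin 2) ℂ) :
    actOne ι γ (actOne ι δ f) = actOne ι (δ * γ) f := by
  suffices (actOne ι γ).comp (actOne ι δ) = actOne ι (δ * γ) from DFunLike.congr_fun this f
  refine algHom_ext fun v => ?_
  simp only [AlgHom.comp_apply, actOne, aeval_X, map_sum, map_smul, map_mul, Units.val_mul,
    Matrix.mul_apply, Finset.smul_sum, Finset.sum_smul, smul_smul]
  exact Finset.sum_comm

theorem actWreath_rename (g : Fin m → Γ) (s : Equiv.Perm (Fin m)) (i : Fin m)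
    (f : MvPolynomial (Fin 2) ℂ) :
    actWreath ι g s (rename (Prod.mk i) f) = rename (Prod.mk (s i)) (actOne ι (g i) f) := by
  suffices (actWreath ι g s).comp (rename (Prod.mk i)) =
      (rename (Prod.mk (s i))).comp (actOne ι (g i)) from DFunLike.congr_fun this f
  refine algHom_ext fun v => ?_
  simp [actWreath, actOne]

theorem actWreath_polarize {f : MvPolynomial (Fin 2) ℂ} (hf : ∀ γ, actOne ι γ f = f)
    (g : Fin m → Γ) (s : Equiv.Perm (Fin m)) :
    actWreath ι g s (polarize f) = polarize f := by
  simp only [polarize_eq_sum_rename, map_sum, actWreath_rename, hf]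
  exact Equiv.sum_comp s fun i => rename (Prod.mk i) f

theorem actOne_sum_actOne [Fintype Γ] (γ : Γ) (f : MvPolynomial (Fin 2) ℂ) :
    actOne ι γ (∑ δ, actOne ι δ f) = ∑ δ, actOne ι δ f := by
  simp only [map_sum, actOne_actOne]
  exact Equiv.sum_comp (Equiv.mulRight γ) fun δ => actOne ι δ f

omit ι in
theorem monomial_eq_smul_prod_rename (d : Fin m × Fin 2 →₀ ℕ) (c : ℂ) :
    monomial d c = c • ∏ i : Fin m, rename (Prod.mk i) (∏ v : Fin 2, X v ^ d (i, v)) := by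
  rw [monomial_eq, smul_eq_C_mul, Finsupp.prod_fintype _ _ fun _ => pow_zero _,
    Fintype.prod_prod_type]
  simp

theorem sum_actWreath_prod_rename [Fintype Γ] (h : Fin m → MvPolynomial (Fin 2) ℂ) :
    ∑ p : (Fin m → Γ) × Equiv.Perm (Fin m), actWreath ι p.1 p.2 (∏ i, rename (Prod.mk i) (h i)) =
      augmentedMonomial (fun i => rename (Prod.mk i)) fun i => ∑ γ, actOne ι γ (h i) := by
  rw [Fintype.sum_prod_type_right, ← sum_perm_prod_eq_augmentedMonomial]
  refine Finset.sum_congr rfl fun s _ => ?_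
  simp only [map_prod, actWreath_rename, map_sum, Fintype.prod_sum]

theorem sum_actWreath_mem_adjoin [Fintype Γ] (P : MvPolynomial (Fin m × Fin 2) ℂ) :
    ∑ p : (Fin m → Γ) × Equiv.Perm (Fin m), actWreath ι p.1 p.2 P ∈
      Algebra.adjoin ℂ {Q | ∃ f, (∀ γ : Γ, actOne ι γ f = f) ∧ Q = polarize f} := by
  induction P using MvPolynomial.induction_on' with
  | monomial d c =>
    simp only [monomial_eq_smul_prod_rename, map_smul, ← Finset.smul_sum,
      sum_actWreath_prod_rename, polarize_eq_sum_rename]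
    refine Subalgebra.smul_mem _ (augmentedMonomial_mem_adjoin _ ?_ _ fun i => ?_) c
    · intro a ha b hb γ
      rw [map_mul, ha, hb]
    · exact fun γ => actOne_sum_actOne ι γ _
  | add p q hp hq =>
    simpa only [map_add, Finset.sum_add_distrib] using add_mem hp hq

end WreathAction

theorem invariants_generated_by_polarized_general {m : ℕ} [Fintype Γ]
    (ι : Γ →* Matrix.GeneralLinearGroup (Fin 2) ℂ) :
    (Algebra.adjoin ℂ
        {P : MvPolynomial (Fin m × Fin 2) ℂ |
          ∃ f : MvPolynomial (Fin 2) ℂ, (∀ γ : Γ, actOne ι γ f = f) ∧ P = polarize f} :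
      Set (MvPolynomial (Fin m × Fin 2) ℂ)) =
    {P | ∀ (g : Fin m → Γ) (s : Equiv.Perm (Fin m)), actWreath ι g s P = P} := by
  refine Set.Subset.antisymm (fun P hP g s => ?_) fun P hP => ?_
  · refine AlgHom.adjoin_le_equalizer (actWreath ι g s) (AlgHom.id ℂ _) ?_ hP
    rintro _ ⟨f, hf, rfl⟩
    exact actWreath_polarize ι hf g s
  · rw [SetLike.mem_coe, ← Subalgebra.mem_toSubmodule]
    exact Submodule.mem_of_forall_apply_eq_self _
      (fun p : (Fin m → Γ) × Equiv.Perm (Fin m) => (actWreath ι p.1 p.2).toLinearMap)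
      (sum_actWreath_mem_adjoin ι) fun p => hP p.1 p.2

/-- The algebra of invariants `ℂ[x_1,…,x_m,y_1,…,y_m]^{Γ_m}` of the wreath product
`Γ_m = Γ^m ⋊ S_m` (for `Γ ⊂ GL_2(ℂ)` finite, acting diagonally) is generated by the
polynomials `Σ_{i=1}^m f(x_i,y_i)` with `f ∈ ℂ[x,y]^Γ` (equivalently, with `f` running
over a linear basis of `ℂ[x,y]^Γ`). -/
theorem invariants_generated_by_polarized {m : ℕ} [Fintype Γ]
    (ι : Γ →* Matrix.GeneralLinearGroup (Fin 2) ℂ) (hι : Function.Injective ι) :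
    (Algebra.adjoin ℂ
        {P : MvPolynomial (Fin m × Fin 2) ℂ |
          ∃ f : MvPolynomial (Fin 2) ℂ, (∀ γ : Γ, actOne ι γ f = f) ∧ P = polarize f} :
      Set (MvPolynomial (Fin m × Fin 2) ℂ)) =
    {P | ∀ (g : Fin m → Γ) (s : Equiv.Perm (Fin m)), actWreath ι g s P = P} :=
  invariants_generated_by_polarized_general ι
end
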